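/- There exists an absolute constant C > 0 such that for every odd prime power q, every r ∈ 𝔽_q \ {0}, and every function f : C_r → ℂ on the circle C_r ⊆ 𝔽_q², the L²→L⁴ extension estimate holds: ( Σ_{c ∈ 𝔽_q²} | |C_r|^{-1} Σ_{x ∈ C_r} χ(c·x) f(x) |⁴ )^{1/4} ≤ C ( |C_r|^{-1} Σ_{x ∈ C_r} |f(x)|² )^{1/2}. -/

import Mathlib

/-!
Write `E f (w) = ∑_{x ∈ C_r} χ(w·x) f(x)`. Then `(E f)² = E' (f ∗ f)`, where `E'` is the Fourier
transform on all of `𝔽_q²` and `f ∗ f (s) = ∑_{x + y = s} f(x) f(y)` with `x, y ∈ C_r`, so by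
Plancherel `∑_w |E f (w)|⁴ = q² ∑_s |f ∗ f (s)|²`. For `s ≠ 0` the points `x ∈ C_r` with
`s - x ∈ C_r` lie on the line `2 s·x = s·s`, which meets the circle in at most two points; with
Cauchy–Schwarz this gives `∑_s |f ∗ f (s)|² ≤ 3 (∑ |f|²)²`. Finally `|C_r| = q - η(-1) ≥ q - 1`
(a Jacobi sum of the quadratic character `η`), so the normalisation by `|C_r|` turns this into
the `L² → L⁴` bound with `C = 2`.
-/

open Finset

/-- Dot product `x·y = x₁y₁ + ⋯ + xₙyₙ` on `𝔽_q^n`. -/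
def dotP {F : Type*} [CommRing F] {n : ℕ} (x y : Fin n → F) : F := ∑ i, x i * y i

/-- The "norm" `‖x‖ = x₁² + ⋯ + xₙ²` on `𝔽_q^n`. -/
def nrm {F : Type*} [CommRing F] {n : ℕ} (x : Fin n → F) : F := ∑ i, x i * x i

/-- The sphere `S_r = {x ∈ 𝔽_q^n : ‖x‖ = r}`. -/
def sph (F : Type*) [CommRing F] [Fintype F] [DecidableEq F] (n : ℕ) (r : F) :
    Finset (Fin n → F) := Finset.univ.filter fun x => nrm x = r

/-- The dot product set `∏(E) = {x·y : x, y ∈ E}`. -/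
def prodSet {F : Type*} [CommRing F] [DecidableEq F] {n : ℕ} (E : Finset (Fin n → F)) :
    Finset F := (E ×ˢ E).image fun p => dotP p.1 p.2

/-- Fourier transform of the indicator function of `X`:
`X̂(m) = q^{-n} ∑_{x ∈ X} χ(-x·m)`. -/
noncomputable def fourierCoef {F : Type*} [CommRing F] [Fintype F] {n : ℕ}
    (χ : AddChar F ℂ) (X : Finset (Fin n → F)) (m : Fin n → F) : ℂ :=
  ((Fintype.card F : ℂ) ^ n)⁻¹ * ∑ x ∈ X, χ (-(dotP x m))

section DotProduct
variable {R : Type*} [CommRing R] {n : ℕ}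

lemma dotP_eq_dotProduct (x y : Fin n → R) : dotP x y = x ⬝ᵥ y := rfl

lemma nrm_eq_dotProduct (x : Fin n → R) : nrm x = x ⬝ᵥ x := rfl

lemma mem_sph [Fintype R] [DecidableEq R] {r : R} {x : Fin n → R} :
    x ∈ sph R n r ↔ nrm x = r := by
  simp [sph]

lemma neg_mem_sph [Fintype R] [DecidableEq R] {r : R} {x : Fin n → R} (hx : x ∈ sph R n r) :
    -x ∈ sph R n r := by
  rw [mem_sph] at hx ⊢
  rw [nrm_eq_dotProduct, neg_dotProduct, dotProduct_neg, neg_neg]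
  exact hx

lemma add_smul_dotProduct_self (x v : Fin n → R) (t : R) :
    (x + t • v) ⬝ᵥ (x + t • v) = x ⬝ᵥ x + 2 * t * (x ⬝ᵥ v) + t ^ 2 * (v ⬝ᵥ v) := by
  simp only [add_dotProduct, dotProduct_add, smul_dotProduct, dotProduct_smul, smul_eq_mul,
    dotProduct_comm v x]
  ring

lemma two_mul_dotProduct_eq_of_nrm_eq {r : R} {s x : Fin n → R} (hx : nrm x = r)
    (hsx : nrm (s - x) = r) : 2 * (s ⬝ᵥ x) = s ⬝ᵥ s := by
  rw [nrm_eq_dotProduct] at hx hsx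
  simp only [sub_dotProduct, dotProduct_sub, dotProduct_comm x s] at hsx
  linear_combination hx - hsx

end DotProduct

lemma AddChar.map_sum_eq_prod {ι A M : Type*} [AddCommMonoid A] [CommMonoid M]
    (ψ : AddChar A M) (s : Finset ι) (a : ι → A) : ψ (∑ i ∈ s, a i) = ∏ i ∈ s, ψ (a i) :=
  map_prod ψ.toMonoidHom (fun i => Multiplicative.ofAdd (a i)) s

section AddRepr
variable {V : Type*} [AddCommGroup V] [DecidableEq V]

def addRepr (S : Finset V) (s : V) : Finset (V × V) := (S ×ˢ S).filter fun p => p.1 + p.2 = s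

noncomputable def selfConv (S : Finset V) (f : V → ℂ) (s : V) : ℂ :=
  ∑ p ∈ addRepr S s, f p.1 * f p.2

lemma card_addRepr (S : Finset V) (s : V) : #(addRepr S s) = #{x ∈ S | s - x ∈ S} := by
  refine Finset.card_nbij' Prod.fst (fun x => (x, s - x)) ?_ ?_ ?_ ?_
  · rintro ⟨a, b⟩ h
    simp only [addRepr, coe_filter, mem_product, Set.mem_ofPred_eq] at h ⊢
    obtain ⟨⟨ha, hb⟩, rfl⟩ := h
    simpa using And.intro ha hb
  · intro x hx
    simp only [addRepr, coe_filter, mem_product, Set.mem_ofPred_eq] at hx ⊢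
    simpa using hx
  · rintro ⟨a, b⟩ h
    simp only [addRepr, coe_filter, mem_product, Set.mem_ofPred_eq] at h
    simp [← h.2]
  · intro x _
    rfl

lemma sum_sum_addRepr [Fintype V] (S : Finset V) {M : Type*} [AddCommMonoid M] (g : V × V → M) :
    ∑ s, ∑ p ∈ addRepr S s, g p = ∑ p ∈ S ×ˢ S, g p :=
  Finset.sum_fiberwise _ _ g

variable (f : V → ℂ)

lemma norm_selfConv_zero_le {S : Finset V} (hS : ∀ x ∈ S, -x ∈ S) :
    ‖selfConv S f 0‖ ≤ ∑ x ∈ S, ‖f x‖ ^ 2 := by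
  have hconv : selfConv S f 0 = ∑ x ∈ S, f x * f (-x) := by
    refine Finset.sum_nbij' Prod.fst (fun x => (x, -x)) ?_ ?_ ?_ ?_ ?_ <;>
      simp +contextual [addRepr, hS, add_eq_zero_iff_eq_neg', Prod.ext_iff]
  have hneg : ∑ x ∈ S, ‖f (-x)‖ ^ 2 = ∑ x ∈ S, ‖f x‖ ^ 2 :=
    Finset.sum_nbij' Neg.neg Neg.neg hS hS (fun x _ => neg_neg x) (fun x _ => neg_neg x)
      (fun x _ => rfl)
  calc ‖selfConv S f 0‖ ≤ ∑ x ∈ S, ‖f x‖ * ‖f (-x)‖ := by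
        rw [hconv]; exact (norm_sum_le _ _).trans_eq (by simp only [norm_mul])
    _ ≤ ∑ x ∈ S, (‖f x‖ ^ 2 + ‖f (-x)‖ ^ 2) / 2 :=
        Finset.sum_le_sum fun x _ => by nlinarith [sq_nonneg (‖f x‖ - ‖f (-x)‖)]
    _ = ∑ x ∈ S, ‖f x‖ ^ 2 := by
        rw [← Finset.sum_div, Finset.sum_add_distrib, hneg]; ring

lemma norm_selfConv_sq_le (S : Finset V) (s : V) :
    ‖selfConv S f s‖ ^ 2 ≤ #(addRepr S s) * ∑ p ∈ addRepr S s, ‖f p.1‖ ^ 2 * ‖f p.2‖ ^ 2 := by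
  calc ‖selfConv S f s‖ ^ 2 ≤ (∑ p ∈ addRepr S s, ‖f p.1‖ * ‖f p.2‖) ^ 2 := by
        gcongr
        exact (norm_sum_le _ _).trans_eq (by simp only [norm_mul])
    _ ≤ _ := by
        simpa only [mul_pow] using sq_sum_le_card_mul_sum_sq (s := addRepr S s)
          (f := fun p => ‖f p.1‖ * ‖f p.2‖)

lemma sum_norm_selfConv_sq_le [Fintype V] {S : Finset V} (hS : ∀ x ∈ S, -x ∈ S) {k : ℕ}
    (hk : ∀ s ≠ 0, #(addRepr S s) ≤ k) :
    ∑ s, ‖selfConv S f s‖ ^ 2 ≤ (1 + k) * (∑ x ∈ S, ‖f x‖ ^ 2) ^ 2 := by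
  set T := ∑ x ∈ S, ‖f x‖ ^ 2
  have hzero : ‖selfConv S f 0‖ ^ 2 ≤ T ^ 2 := by
    gcongr; exact norm_selfConv_zero_le f hS
  have hrest : ∑ s ∈ univ.erase 0, ‖selfConv S f s‖ ^ 2 ≤ k * T ^ 2 := calc
    _ ≤ ∑ s ∈ univ.erase 0, k * ∑ p ∈ addRepr S s, ‖f p.1‖ ^ 2 * ‖f p.2‖ ^ 2 := by
        refine Finset.sum_le_sum fun s hs => (norm_selfConv_sq_le f S s).trans ?_
        gcongr
        exact_mod_cast hk s (Finset.ne_of_mem_erase hs)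
    _ ≤ k * ∑ s, ∑ p ∈ addRepr S s, ‖f p.1‖ ^ 2 * ‖f p.2‖ ^ 2 := by
        rw [← Finset.mul_sum]
        gcongr
        exact Finset.subset_univ _
    _ = k * T ^ 2 := by
        rw [sum_sum_addRepr, sq, Finset.sum_mul_sum, Finset.sum_product]
  rw [← Finset.add_sum_erase _ _ (Finset.mem_univ 0)]
  linarith

end AddRepr

section Fourier
variable {F : Type*} [Field F] [Fintype F] [DecidableEq F] {n : ℕ} {χ : AddChar F ℂ}

lemma sum_addChar_dotP (hχ : χ ≠ 1) (u : Fin n → F) :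
    ∑ w : Fin n → F, χ (dotP w u) = if u = 0 then (Fintype.card F : ℂ) ^ n else 0 := by
  simp only [dotP, AddChar.map_sum_eq_prod]
  rw [← Fintype.prod_sum (fun i a => χ (a * u i))]
  simp only [AddChar.sum_mulShift _ (AddChar.IsPrimitive.of_ne_one hχ), Nat.cast_ite,
    Nat.cast_zero, Finset.prod_ite_zero]
  simp [funext_iff]

lemma sum_norm_sq_fourier (hχ : χ ≠ 1) (G : (Fin n → F) → ℂ) :
    ∑ w, ‖∑ s, χ (dotP w s) * G s‖ ^ 2 = (Fintype.card F : ℝ) ^ n * ∑ s, ‖G s‖ ^ 2 := by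
  apply Complex.ofReal_injective
  push_cast
  simp only [← Complex.mul_conj', map_sum, map_mul, ← AddChar.map_neg_eq_conj,
    Finset.sum_mul_sum]
  calc ∑ w, ∑ s, ∑ t, χ (dotP w s) * G s * (χ (-dotP w t) * (starRingEnd ℂ) (G t))
      = ∑ s, ∑ t, G s * (starRingEnd ℂ) (G t) * ∑ w, χ (dotP w (s - t)) := by
        rw [Finset.sum_comm]
        refine Finset.sum_congr rfl fun s _ => ?_
        rw [Finset.sum_comm]
        refine Finset.sum_congr rfl fun t _ => ?_
        rw [Finset.mul_sum]
        refine Finset.sum_congr rfl fun w _ => ?_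
        simp only [dotP_eq_dotProduct]
        rw [dotProduct_sub, sub_eq_add_neg, AddChar.map_add_eq_mul]
        ring
    _ = ∑ s, (Fintype.card F : ℂ) ^ n * (G s * (starRingEnd ℂ) (G s)) := by
        refine Finset.sum_congr rfl fun s _ => ?_
        simp only [sum_addChar_dotP hχ, sub_eq_zero, mul_ite, mul_zero, Finset.sum_ite_eq,
          Finset.mem_univ, if_true]
        ring
    _ = _ := (Finset.mul_sum _ _ _).symm

lemma sq_sum_addChar_dotP_mul (S : Finset (Fin n → F)) (f : (Fin n → F) → ℂ) (w : Fin n → F) :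
    (∑ x ∈ S, χ (dotP w x) * f x) ^ 2 = ∑ s, χ (dotP w s) * selfConv S f s := by
  rw [sq, Finset.sum_mul_sum, ← Finset.sum_product', ← sum_sum_addRepr]
  refine Finset.sum_congr rfl fun s _ => ?_
  rw [selfConv, Finset.mul_sum]
  refine Finset.sum_congr rfl fun p hp => ?_
  simp only [← (Finset.mem_filter.mp hp).2, dotP_eq_dotProduct, dotProduct_add,
    AddChar.map_add_eq_mul]
  ring

lemma sum_norm_extension_pow_four (hχ : χ ≠ 1) (S : Finset (Fin n → F)) (f : (Fin n → F) → ℂ) :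
    ∑ w, ‖∑ x ∈ S, χ (dotP w x) * f x‖ ^ 4 =
      (Fintype.card F : ℝ) ^ n * ∑ s, ‖selfConv S f s‖ ^ 2 := by
  simp only [← sum_norm_sq_fourier hχ, ← sq_sum_addChar_dotP_mul, norm_pow, ← pow_mul]

end Fourier

section QuadraticChar
variable {F : Type*} [Field F] [Fintype F] [DecidableEq F]

lemma sum_sq_eq_sum_quadraticChar (hF : ringChar F ≠ 2) (g : F → ℤ) :
    ∑ a, g (a ^ 2) = ∑ u, (quadraticChar F u + 1) * g u := by
  rw [← Finset.sum_fiberwise univ (fun a => a ^ 2)]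
  refine Finset.sum_congr rfl fun u _ => ?_
  rw [Finset.sum_congr rfl fun a ha => congrArg g (Finset.mem_filter.mp ha).2, Finset.sum_const,
    ← quadraticChar_card_sqrts hF, Set.toFinset_ofPred, nsmul_eq_mul]

lemma sum_quadraticChar_sub (hF : ringChar F ≠ 2) (r : F) : ∑ u, quadraticChar F (r - u) = 0 := by
  rw [Fintype.sum_equiv (Equiv.subLeft r) (fun u => quadraticChar F (r - u)) _ fun _ => rfl,
    quadraticChar_sum_zero hF]

lemma sum_quadraticChar_mul_quadraticChar_sub (hF : ringChar F ≠ 2) {r : F} (hr : r ≠ 0) :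
    ∑ u, quadraticChar F u * quadraticChar F (r - u) = -quadraticChar F (-1) := by
  rw [← jacobiSum_nontrivial_inv (quadraticChar_ne_one hF), (quadraticChar_isQuadratic F).inv,
    jacobiSum, ← Fintype.sum_equiv (Equiv.mulLeft₀ r hr)
      (fun x => quadraticChar F (r * x) * quadraticChar F (r - r * x)) _ fun _ => rfl]
  refine Finset.sum_congr rfl fun x _ => ?_
  have hrr : quadraticChar F r * quadraticChar F r = 1 := by rw [← sq, quadraticChar_sq_one hr]
  simp only [← mul_one_sub, map_mul]
  linear_combination (quadraticChar F x * quadraticChar F (1 - x)) * hrr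

lemma card_sph_two (hF : ringChar F ≠ 2) {r : F} (hr : r ≠ 0) :
    (#(sph F 2 r) : ℤ) = Fintype.card F - quadraticChar F (-1) := by
  let η := quadraticChar F
  calc (#(sph F 2 r) : ℤ) = ∑ a : F, ∑ b : F, if a ^ 2 + b ^ 2 = r then 1 else 0 := by
        rw [sph, Finset.card_filter, ← (finTwoArrowEquiv F).symm.sum_comp, Fintype.sum_prod_type]
        simp [nrm, Fin.sum_univ_two, sq]
    _ = ∑ a : F, ∑ v, (η v + 1) * if a ^ 2 + v = r then 1 else 0 :=
        Finset.sum_congr rfl fun a _ =>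
          sum_sq_eq_sum_quadraticChar hF fun v => if a ^ 2 + v = r then 1 else 0
    _ = ∑ u, (η u + 1) * ∑ v, (η v + 1) * if u + v = r then 1 else 0 :=
        sum_sq_eq_sum_quadraticChar hF fun u => ∑ v, (η v + 1) * if u + v = r then 1 else 0
    _ = ∑ u, (η u + 1) * (η (r - u) + 1) := by
        simp only [← eq_sub_iff_add_eq', mul_ite, mul_one, mul_zero, Finset.sum_ite_eq',
          Finset.mem_univ, if_true]
    _ = _ := by
        simp only [η, add_mul, mul_add, mul_one, one_mul, Finset.sum_add_distrib,
          sum_quadraticChar_mul_quadraticChar_sub hF hr, quadraticChar_sum_zero hF,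
          sum_quadraticChar_sub hF, Finset.sum_const, Finset.card_univ, nsmul_eq_mul]
        ring

lemma sub_one_le_card_sph_two (hF : ringChar F ≠ 2) {r : F} (hr : r ≠ 0) :
    (Fintype.card F : ℝ) - 1 ≤ #(sph F 2 r) := by
  have hη : quadraticChar F (-1) ≤ 1 := by
    rcases quadraticChar_dichotomy (neg_ne_zero.mpr (one_ne_zero (α := F))) with h | h <;>
      simp [h]
  have h := card_sph_two hF hr
  exact_mod_cast (by linarith : (Fintype.card F : ℤ) - 1 ≤ #(sph F 2 r))

end QuadraticChar

section Circle
variable {F : Type*} [Field F]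

def perp (a : Fin 2 → F) : Fin 2 → F := ![-a 1, a 0]

lemma perp_ne_zero {a : Fin 2 → F} (ha : a ≠ 0) : perp a ≠ 0 := by
  contrapose! ha
  have h0 := congrFun ha 0
  have h1 := congrFun ha 1
  simp only [perp, Matrix.cons_val_zero, Matrix.cons_val_one, Pi.zero_apply, neg_eq_zero] at h0 h1
  ext i; fin_cases i <;> assumption

lemma perp_dotProduct_perp (a : Fin 2 → F) : perp a ⬝ᵥ perp a = a ⬝ᵥ a := by
  simp [perp, dotProduct, Fin.sum_univ_two]; ring

lemma exists_eq_smul_perp {a b : Fin 2 → F} (ha : a ≠ 0) (hab : a ⬝ᵥ b = 0) :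
    ∃ t : F, b = t • perp a := by
  simp only [dotProduct, Fin.sum_univ_two] at hab
  by_cases h0 : a 0 = 0
  · have h1 : a 1 ≠ 0 := fun h1 => ha (by ext i; fin_cases i <;> assumption)
    refine ⟨-b 0 / a 1, ?_⟩
    ext i; fin_cases i <;> simp [perp] <;> field_simp
    linear_combination hab
  · refine ⟨b 1 / a 0, ?_⟩
    ext i; fin_cases i <;> simp [perp] <;> field_simp
    linear_combination hab

/-- A line `s·x = c` meets a circle of nonzero radius in at most two points. -/
lemma eq_or_eq_or_eq_of_dotProduct_eq (h2 : (2 : F) ≠ 0) {r : F} (hr : r ≠ 0)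
    {s x y z : Fin 2 → F} (hs : s ≠ 0) (hx : nrm x = r) (hy : nrm y = r) (hz : nrm z = r)
    (hxy : s ⬝ᵥ x = s ⬝ᵥ y) (hxz : s ⬝ᵥ x = s ⬝ᵥ z) : x = y ∨ x = z ∨ y = z := by
  obtain ⟨t, ht⟩ := exists_eq_smul_perp hs
    (by rw [dotProduct_sub, hxy, sub_self] : s ⬝ᵥ (y - x) = 0)
  obtain ⟨u, hu⟩ := exists_eq_smul_perp hs
    (by rw [dotProduct_sub, hxz, sub_self] : s ⬝ᵥ (z - x) = 0)
  rw [sub_eq_iff_eq_add'] at ht hu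
  by_contra! hne
  set v := perp s
  have ht0 : t ≠ 0 := fun h => hne.1 (by rw [ht, h, zero_smul, add_zero])
  have hu0 : u ≠ 0 := fun h => hne.2.1 (by rw [hu, h, zero_smul, add_zero])
  have htu : t ≠ u := fun h => hne.2.2 (by rw [ht, hu, h])
  have hline : ∀ c ≠ 0, nrm (x + c • v) = r → 2 * (x ⬝ᵥ v) + c * (v ⬝ᵥ v) = 0 := by
    intro c hc hcr
    rw [nrm_eq_dotProduct, add_smul_dotProduct_self, ← nrm_eq_dotProduct, hx] at hcr
    exact (mul_eq_zero.mp
      (by linear_combination hcr : c * (2 * (x ⬝ᵥ v) + c * (v ⬝ᵥ v)) = 0)).resolve_left hc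
  have hyt := hline t ht0 (ht ▸ hy)
  have hzu := hline u hu0 (hu ▸ hz)
  have hvv : v ⬝ᵥ v = 0 := (mul_eq_zero.mp
    (by linear_combination hyt - hzu : (t - u) * (v ⬝ᵥ v) = 0)).resolve_left (sub_ne_zero.mpr htu)
  have hvx : v ⬝ᵥ x = 0 := by
    rw [dotProduct_comm]
    exact (mul_eq_zero.mp
      (by linear_combination hyt - t * hvv : 2 * (x ⬝ᵥ v) = 0)).resolve_left h2
  obtain ⟨w, hw⟩ := exists_eq_smul_perp (perp_ne_zero hs) hvx
  apply hr
  rw [← hx, nrm_eq_dotProduct, hw, dotProduct_smul, smul_dotProduct, perp_dotProduct_perp, hvv,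
    smul_zero, smul_zero]

lemma card_addRepr_sph_le_two [Fintype F] [DecidableEq F] (h2 : (2 : F) ≠ 0) {r : F} (hr : r ≠ 0)
    {s : Fin 2 → F} (hs : s ≠ 0) : #(addRepr (sph F 2 r) s) ≤ 2 := by
  rw [card_addRepr, ← not_lt, Finset.two_lt_card]
  rintro ⟨x, hx, y, hy, z, hz, hxy, hxz, hyz⟩
  simp only [Finset.mem_filter, mem_sph] at hx hy hz
  have hdot : ∀ {a b : Fin 2 → F}, nrm a = r → nrm (s - a) = r → nrm b = r → nrm (s - b) = r →
      s ⬝ᵥ a = s ⬝ᵥ b := fun ha hsa hb hsb => mul_left_cancel₀ h2 <|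
    (two_mul_dotProduct_eq_of_nrm_eq ha hsa).trans (two_mul_dotProduct_eq_of_nrm_eq hb hsb).symm
  rcases eq_or_eq_or_eq_of_dotProduct_eq h2 hr hs hx.1 hy.1 hz.1
    (hdot hx.1 hx.2 hy.1 hy.2) (hdot hx.1 hx.2 hz.1 hz.2) with h | h | h
  exacts [hxy h, hxz h, hyz h]

lemma sum_norm_extension_sph_two_pow_four_le [Fintype F] [DecidableEq F] (hF : ringChar F ≠ 2)
    {χ : AddChar F ℂ} (hχ : χ ≠ 1) {r : F} (hr : r ≠ 0) (f : (Fin 2 → F) → ℂ) :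
    ∑ w, ‖∑ x ∈ sph F 2 r, χ (dotP w x) * f x‖ ^ 4 ≤
      3 * (Fintype.card F : ℝ) ^ 2 * (∑ x ∈ sph F 2 r, ‖f x‖ ^ 2) ^ 2 := by
  rw [sum_norm_extension_pow_four hχ, mul_comm 3, mul_assoc]
  gcongr
  exact (sum_norm_selfConv_sq_le f (fun x => neg_mem_sph)
    (fun s hs => card_addRepr_sph_le_two (Ring.two_ne_zero hF) hr hs)).trans_eq (by norm_num)

end Circle

lemma rpow_quarter_le_of_le_mul {a b c : ℝ} (ha : 0 ≤ a) (hb : 0 ≤ b) (hc : 0 ≤ c)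
    (h : a ≤ c ^ 4 * b ^ 2) : a ^ (1 / 4 : ℝ) ≤ c * b ^ (1 / 2 : ℝ) := by
  have hcb : c ^ 4 * b ^ 2 = (c * b ^ (1 / 2 : ℝ)) ^ 4 := by
    rw [← Real.sqrt_eq_rpow, mul_pow, show (4 : ℕ) = 2 * 2 from rfl, pow_mul (√b),
      Real.sq_sqrt hb]
  calc a ^ (1 / 4 : ℝ) ≤ (c ^ 4 * b ^ 2) ^ (1 / 4 : ℝ) := by gcongr
    _ = c * b ^ (1 / 2 : ℝ) := by
      rw [hcb, show (1 / 4 : ℝ) = ((4 : ℕ) : ℝ)⁻¹ by norm_num,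
        Real.pow_rpow_inv_natCast (by positivity) (by norm_num)]

/-- the `L² → L⁴` extension estimate for circles of nonzero
radius in `𝔽_q²`, with an absolute constant `C`. -/
theorem stmt5 :
    ∃ C : ℝ, 0 < C ∧
      ∀ (F : Type) [Field F] [Fintype F] [DecidableEq F],
        Odd (Fintype.card F) →
        ∀ (χ : AddChar F ℂ), χ ≠ 1 →
        ∀ r : F, r ≠ 0 →
        ∀ f : (Fin 2 → F) → ℂ,
          (∑ w : Fin 2 → F,
              ‖(((sph F 2 r).card : ℂ))⁻¹ * ∑ x ∈ sph F 2 r, χ (dotP w x) * f x‖ ^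
                (4 : ℝ)) ^ ((1 : ℝ) / 4) ≤
          C * ((((sph F 2 r).card : ℝ))⁻¹ * ∑ x ∈ sph F 2 r, ‖f x‖ ^ 2) ^ ((1 : ℝ) / 2) := by
  refine ⟨2, two_pos, fun F _ _ _ hodd χ hχ r hr f => ?_⟩
  have hF : ringChar F ≠ 2 := fun h =>
    Nat.not_even_iff_odd.mpr hodd (Nat.even_iff.mpr (FiniteField.even_card_of_char_two h))
  have hq : (2 : ℝ) ≤ Fintype.card F := by
    exact_mod_cast (Fintype.one_lt_card : 1 < Fintype.card F)
  have hn := sub_one_le_card_sph_two hF hr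
  have hE := sum_norm_extension_sph_two_pow_four_le hF hχ hr f
  simp only [Real.rpow_ofNat]
  refine rpow_quarter_le_of_le_mul (by positivity) (by positivity) zero_le_two ?_
  simp only [norm_mul, norm_inv, Complex.norm_natCast, mul_pow, ← Finset.mul_sum]
  generalize (Fintype.card F : ℝ) = q at hq hn hE
  generalize (#(sph F 2 r) : ℝ) = n at hn ⊢
  generalize ∑ x ∈ sph F 2 r, ‖f x‖ ^ 2 = T at hE ⊢
  have hn0 : n * n⁻¹ = 1 := mul_inv_cancel₀ (by linarith)
  calc n⁻¹ ^ 4 * ∑ w, ‖∑ x ∈ sph F 2 r, χ (dotP w x) * f x‖ ^ 4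
      ≤ n⁻¹ ^ 4 * (3 * q ^ 2 * T ^ 2) := by gcongr
    _ = (3 * q ^ 2) * (n⁻¹ ^ 4 * T ^ 2) := by ring
    _ ≤ (16 * n ^ 2) * (n⁻¹ ^ 4 * T ^ 2) :=
        mul_le_mul_of_nonneg_right (by nlinarith) (by positivity)
    _ = 2 ^ 4 * (n⁻¹ ^ 2 * T ^ 2) * (n * n⁻¹) ^ 2 := by ring
    _ = 2 ^ 4 * (n⁻¹ ^ 2 * T ^ 2) := by rw [hn0, one_pow, mul_one]
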